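/- Lemma (population optimality is equivalent to ∼-shatterability): Let Q be a probing family containing all linear predictors and closed under vector manipulation. An encoder φ : X → ℝ^d is population optimal for the ∼-invariant tasks T∼ and Q if and only if φ is (X,∼)-shattered by Q, i.e., every ∼-invariant binary labeling c : X → {0,1} satisfies c(x) = 1[f(φ(x)) ≥ 0] for all x ∈ X, for some scalar-output f ∈ Q. -/

import Mathlib

open scoped Classical
open Finset

namespace ISSL

/-- Number of equivalence classes of the equivalence relation `r` on `X`. -/
noncomputable def nequiv {X : Type*} (r : Setoid X) : ℕ := Nat.card (Quotient r)

noncomputable instance instFintypeQuot {X : Type*} [Fintype X] (r : Setoid X) :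
    Fintype (Quotient r) := Fintype.ofFinite _

/-- `M` is a maximal invariant for `r`: `M x = M x'` iff `x ∼ x'`. -/
def IsMaximalInvariant {X : Type*} (r : Setoid X) {k : ℕ} (M : X → Fin k) : Prop :=
  ∀ x x', M x = M x' ↔ r x x'

/-- A map is `∼`-invariant if it is constant on equivalence classes. -/
def IsInvariant {X : Type*} (r : Setoid X) {Z : Type*} (φ : X → Z) : Prop :=
  ∀ x x', r x x' → φ x = φ x'

/-- Argmax prediction `pred(v) = argmax_i v[i]` for a vector-output predictor. -/
noncomputable def predArg {k : ℕ} [NeZero k] (v : Fin k → ℝ) : Fin k :=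
  Classical.choose ((Finset.univ : Finset (Fin k)).exists_max_image v
    ⟨⟨0, Nat.pos_of_ne_zero (NeZero.ne k)⟩, Finset.mem_univ _⟩)

/-- Binary prediction `1[v ≥ 0]` from a scalar logit. -/
noncomputable def predBin (v : Fin 1 → ℝ) : Fin 2 := if 0 ≤ v 0 then 1 else 0

/-- A probing family on `ℝ^d`: for each output arity `k`, a set of maps `ℝ^d → ℝ^k`. -/
structure ProbingFamily (d : ℕ) where
  mem : (k : ℕ) → Set ((Fin d → ℝ) → (Fin k → ℝ))

/-- The linear probing family: all maps `z ↦ Wᵀ z`. -/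
def linearFamily (d : ℕ) : ProbingFamily d :=
  ⟨fun k => {f | ∃ W : Matrix (Fin d) (Fin k) ℝ, ∀ z j, f z j = ∑ i, W i j * z i}⟩

/-- `Q` contains all linear predictors. -/
def ContainsLinear {d : ℕ} (Q : ProbingFamily d) : Prop :=
  ∀ k, (linearFamily d).mem k ⊆ Q.mem k

/-- `Q` is closed under vector manipulation: concatenation of two members, coordinate
indexing of a member, and sums of two scalar-output members. -/
def ClosedUnderVectorManipulation {d : ℕ} (Q : ProbingFamily d) : Prop :=
  (∀ (k k' : ℕ) (f : (Fin d → ℝ) → Fin k → ℝ) (g : (Fin d → ℝ) → Fin k' → ℝ),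
      f ∈ Q.mem k → g ∈ Q.mem k' → (fun z => Fin.append (f z) (g z)) ∈ Q.mem (k + k')) ∧
  (∀ (k : ℕ) (f : (Fin d → ℝ) → Fin k → ℝ), f ∈ Q.mem k →
      ∀ i : Fin k, (fun z (_ : Fin 1) => f z i) ∈ Q.mem 1) ∧
  (∀ f g : (Fin d → ℝ) → Fin 1 → ℝ, f ∈ Q.mem 1 → g ∈ Q.mem 1 →
      (fun z j => f z j + g z j) ∈ Q.mem 1)

/-- The classification rules induced by the probing family at arity `k`: for `k = 2`
a scalar-output predictor with sign prediction, for `k ≥ 3` a `k`-output predictor with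
argmax prediction. -/
noncomputable def rules {d : ℕ} (Q : ProbingFamily d) : (k : ℕ) → Set ((Fin d → ℝ) → Fin k)
  | 0 => ∅
  | 1 => ∅
  | 2 => {h | ∃ f ∈ Q.mem 1, ∀ z, h z = predBin (f z)}
  | (n + 3) => {h | ∃ f ∈ Q.mem (n + 3), ∀ z, h z = predArg (f z)}

/-- A `k`-ary `∼`-invariant task: a joint distribution on `X × Fin k` such that for every
input the most likely label is unique and invariant under `∼`. -/
structure InvTask (X : Type*) [Fintype X] (r : Setoid X) (k : ℕ) where
  p : X → Fin k → ℝ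
  nonneg : ∀ x y, 0 ≤ p x y
  sum_one : ∑ x : X, ∑ y : Fin k, p x y = 1
  label : X → Fin k
  label_argmax : ∀ x y, y ≠ label x → p x y < p x (label x)
  label_inv : ∀ x x', r x x' → label x = label x'

variable {X : Type*} [Fintype X] {r : Setoid X} {d k : ℕ}

/-- Population 0-1 risk of a classification rule `h` through encoder `φ` on task `t`. -/
noncomputable def risk (t : InvTask X r k) (φ : X → Fin d → ℝ)
    (h : (Fin d → ℝ) → Fin k) : ℝ :=
  ∑ x : X, ∑ y : Fin k, t.p x y * (if y = h (φ x) then 0 else 1)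

/-- Bayes error of task `t`. -/
noncomputable def bayes (t : InvTask X r k) : ℝ := 1 - ∑ x : X, t.p x (t.label x)

/-- `φ` is population optimal: the best probe realizes the Bayes error on every invariant task. -/
noncomputable def PopOptimal (r : Setoid X) (Q : ProbingFamily d)
    (φ : X → Fin d → ℝ) : Prop :=
  ∀ k : ℕ, 2 ≤ k → k ≤ nequiv r → ∀ t : InvTask X r k,
    sInf ((fun h => risk t φ h) '' rules Q k) = bayes t

/-- Input marginal of task `t`. -/
noncomputable def marginal (t : InvTask X r k) (x : X) : ℝ := ∑ y : Fin k, t.p x y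

/-- Empirical 0-1 risk of rule `h` on a dataset of inputs labeled by the most likely label. -/
noncomputable def empRisk (t : InvTask X r k) (φ : X → Fin d → ℝ)
    (h : (Fin d → ℝ) → Fin k) {n : ℕ} (D : Fin n → X) : ℝ :=
  (∑ i : Fin n, if t.label (D i) = h (φ (D i)) then (0 : ℝ) else 1) / n

/-- `h` is an empirical risk minimizer on dataset `D`. -/
noncomputable def IsERM (Q : ProbingFamily d) (t : InvTask X r k) (φ : X → Fin d → ℝ)
    {n : ℕ} (D : Fin n → X) (h : (Fin d → ℝ) → Fin k) : Prop :=
  h ∈ rules Q k ∧ ∀ h' ∈ rules Q k, empRisk t φ h D ≤ empRisk t φ h' D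

/-- Excess risk of ERMs: worst population risk of an ERM minus the Bayes error. -/
noncomputable def excessRisk (Q : ProbingFamily d) (t : InvTask X r k)
    (φ : X → Fin d → ℝ) {n : ℕ} (D : Fin n → X) : ℝ :=
  sSup ((fun h => risk t φ h) '' {h | IsERM Q t φ D h}) - bayes t

/-- Expected excess risk over datasets of `n` i.i.d. inputs labeled by the most likely label. -/
noncomputable def expExcess (Q : ProbingFamily d) (t : InvTask X r k)
    (φ : X → Fin d → ℝ) (n : ℕ) : ℝ :=
  ∑ D : Fin n → X, (∏ i, marginal t (D i)) * excessRisk Q t φ D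

/-- Worst-case (over invariant tasks) expected excess risk of ERMs. -/
noncomputable def worstExcess (r : Setoid X) (Q : ProbingFamily d)
    (φ : X → Fin d → ℝ) (n : ℕ) : ℝ :=
  sSup {e : ℝ | ∃ k : ℕ, 2 ≤ k ∧ k ≤ nequiv r ∧ ∃ t : InvTask X r k, e = expExcess Q t φ n}

/-- `φ` is sample optimal: population optimal and minimizing the worst-case expected
excess risk of ERMs among population-optimal encoders, for every sample size. -/
noncomputable def SampleOptimal (r : Setoid X) (Q : ProbingFamily d)
    (φ : X → Fin d → ℝ) : Prop :=
  PopOptimal r Q φ ∧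
    ∀ n : ℕ, 1 ≤ n → ∀ φ' : X → Fin d → ℝ, PopOptimal r Q φ' →
      worstExcess r Q φ n ≤ worstExcess r Q φ' n

/-- Probability of an equivalence class under the input marginal of `t`. -/
noncomputable def classProb (t : InvTask X r k) (c : Quotient r) : ℝ :=
  ∑ x : X, if Quotient.mk r x = c then marginal t x else 0

/-- Conditional probability of label `y` given the equivalence class `c` under `t`. -/
noncomputable def classCond (t : InvTask X r k) (c : Quotient r) (y : Fin k) : ℝ :=
  (∑ x : X, if Quotient.mk r x = c then t.p x y else 0) / classProb t c

/-- `φ` is `(X,∼)`-shattered by `Q`: every invariant binary labeling is realized. -/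
noncomputable def InvShattered (r : Setoid X) (Q : ProbingFamily d)
    (φ : X → Fin d → ℝ) : Prop :=
  ∀ c : X → Fin 2, IsInvariant r c → ∃ f ∈ Q.mem 1, ∀ x, c x = predBin (f (φ x))

/-- A set `Z ⊆ ℝ^d` is classically shattered by `Q`. -/
noncomputable def ClassicallyShattered {d : ℕ} (Q : ProbingFamily d)
    (Z : Set (Fin d → ℝ)) : Prop :=
  ∀ c : (Fin d → ℝ) → Fin 2, ∃ f ∈ Q.mem 1, ∀ z ∈ Z, c z = predBin (f z)


section Aux

variable {X : Type*} [Fintype X] {r : Setoid X} {d : ℕ}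

lemma rules_two {Q : ProbingFamily d} :
    rules Q 2 = {h | ∃ f ∈ Q.mem 1, ∀ z, h z = predBin (f z)} := rfl

lemma rules_succ {Q : ProbingFamily d} (n : ℕ) :
    rules Q (n + 3) = {h | ∃ f ∈ Q.mem (n + 3), ∀ z, h z = predArg (f z)} := rfl

lemma risk_eq {k : ℕ} (t : InvTask X r k) (φ : X → Fin d → ℝ)
    (h : (Fin d → ℝ) → Fin k) :
    risk t φ h = 1 - ∑ x : X, t.p x (h (φ x)) := by
  unfold risk
  have hx : ∀ x : X, ∑ y : Fin k, t.p x y * (if y = h (φ x) then 0 else 1)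
      = (∑ y : Fin k, t.p x y) - t.p x (h (φ x)) := by
    intro x
    have hterm : ∀ y : Fin k, t.p x y * (if y = h (φ x) then (0:ℝ) else 1)
        = t.p x y - (if y = h (φ x) then t.p x y else 0) := by
      intro y; split_ifs <;> ring
    rw [Finset.sum_congr rfl (fun y _ => hterm y), Finset.sum_sub_distrib,
      Finset.sum_ite_eq' Finset.univ (h (φ x)) (t.p x)]
    simp
  rw [Finset.sum_congr rfl (fun x _ => hx x), Finset.sum_sub_distrib, t.sum_one]

lemma p_le_label {k : ℕ} (t : InvTask X r k) (x : X) (y : Fin k) :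
    t.p x y ≤ t.p x (t.label x) := by
  rcases eq_or_ne y (t.label x) with h | h
  · rw [h]
  · exact (t.label_argmax x y h).le

lemma bayes_le_risk {k : ℕ} (t : InvTask X r k) (φ : X → Fin d → ℝ)
    (h : (Fin d → ℝ) → Fin k) : bayes t ≤ risk t φ h := by
  rw [risk_eq, bayes]
  have hs : ∑ x : X, t.p x (h (φ x)) ≤ ∑ x : X, t.p x (t.label x) :=
    Finset.sum_le_sum fun x _ => p_le_label t x _
  linarith

lemma predArg_eq {k : ℕ} [NeZero k] (v : Fin k → ℝ) (j0 : Fin k)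
    (h0 : 0 ≤ v j0) (hneg : ∀ j, j ≠ j0 → v j < 0) : predArg v = j0 := by
  have hspec := Classical.choose_spec
    ((Finset.univ : Finset (Fin k)).exists_max_image v
      ⟨⟨0, Nat.pos_of_ne_zero (NeZero.ne k)⟩, Finset.mem_univ _⟩)
  obtain ⟨-, hmax⟩ := hspec
  by_contra hne
  have h1 := hneg _ hne
  have h2 := hmax j0 (Finset.mem_univ _)
  unfold predArg at *
  linarith

lemma append_last {α : Type*} {m : ℕ} (u : Fin m → α) (v : Fin 1 → α) :
    Fin.append u v (Fin.last m) = v 0 := by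
  have h0 : Fin.last m = Fin.natAdd m (0 : Fin 1) := by
    apply Fin.ext; simp
  rw [h0, Fin.append_right]

lemma buildVec {Q : ProbingFamily d} (hQlin : ContainsLinear Q)
    (hQclosed : ClosedUnderVectorManipulation Q) :
    ∀ (m : ℕ) (F : Fin m → ((Fin d → ℝ) → Fin 1 → ℝ)),
      (∀ i, F i ∈ Q.mem 1) → ∃ g ∈ Q.mem m, ∀ z i, g z i = F i z 0 := by
  intro m
  induction m with
  | zero =>
    intro F _
    exact ⟨fun _ j => j.elim0, hQlin 0 ⟨0, fun z j => j.elim0⟩, fun z i => i.elim0⟩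
  | succ m ih =>
    intro F hF
    obtain ⟨g, hg, hgval⟩ := ih (fun i => F i.castSucc) (fun i => hF _)
    refine ⟨fun z => Fin.append (g z) (F (Fin.last m) z),
      hQclosed.1 m 1 g (F (Fin.last m)) hg (hF _), ?_⟩
    intro z i
    refine Fin.lastCases ?_ ?_ i
    · exact append_last (g z) (F (Fin.last m) z)
    · intro j
      have hcast : (j.castSucc : Fin (m + 1)) = Fin.castAdd 1 j := rfl
      show Fin.append (g z) (F (Fin.last m) z) j.castSucc = F j.castSucc z 0
      rw [hcast, Fin.append_left, hgval]
      rfl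

end Aux

/-- **Lemma** (population optimality is equivalent to `∼`-shatterability). -/
theorem popOptimal_iff_invShattered {X : Type*} [Fintype X] (r : Setoid X)
    (hn : 2 ≤ nequiv r) {d : ℕ} (Q : ProbingFamily d)
    (hQlin : ContainsLinear Q) (hQclosed : ClosedUnderVectorManipulation Q)
    (φ : X → Fin d → ℝ) :
    PopOptimal r Q φ ↔ InvShattered r Q φ := by
  constructor
  · -- population optimal → shattered
    intro hpop c hc
    have hXne : Nonempty X := by
      have hq : Nonempty (Quotient r) := by
        have h2 : 0 < Nat.card (Quotient r) := lt_of_lt_of_le (by norm_num) hn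
        exact (Nat.card_pos_iff.mp h2).1
      obtain ⟨q⟩ := hq
      obtain ⟨x, -⟩ := q.exists_rep
      exact ⟨x⟩
    have hNpos : 0 < Fintype.card X := Fintype.card_pos
    set N : ℝ := (Fintype.card X : ℝ) with hNdef
    have hN : (0:ℝ) < N := by rw [hNdef]; exact_mod_cast hNpos
    set t : InvTask X r 2 :=
      { p := fun x y => (if y = c x then 3 else 1) / (4 * N)
        nonneg := by
          intro x y
          split_ifs <;> positivity
        sum_one := by
          have hy : ∀ x : X, ∑ y : Fin 2, ((if y = c x then (3:ℝ) else 1) / (4 * N))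
              = 1 / N := by
            intro x
            rw [← Finset.sum_div]
            have hterm : ∀ y : Fin 2, (if y = c x then (3:ℝ) else 1)
                = 1 + (if y = c x then 2 else 0) := by
              intro y; split_ifs <;> ring
            have h4 : (0:ℝ) < 4 * N := by positivity
            have hnum : ∑ y : Fin 2, (if y = c x then (3:ℝ) else 1) = 4 := by
              rw [Finset.sum_congr rfl (fun y _ => hterm y), Finset.sum_add_distrib,
                Finset.sum_ite_eq' Finset.univ (c x) (fun _ => (2:ℝ))]
              simp
              norm_num
            rw [hnum, div_eq_div_iff h4.ne' hN.ne']
            ring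
          rw [Finset.sum_congr rfl (fun x _ => hy x), Finset.sum_const, nsmul_eq_mul,
            hNdef]
          have hcne : (Fintype.card X : ℝ) ≠ 0 := Nat.cast_ne_zero.mpr hNpos.ne'
          field_simp
          exact_mod_cast Finset.card_univ
        label := c
        label_argmax := by
          intro x y hy
          have h4 : (0:ℝ) < 4 * N := by positivity
          rw [if_neg hy, if_pos rfl, div_lt_div_iff₀ h4 h4]
          nlinarith
        label_inv := hc } with htdef
    have hInf := hpop 2 le_rfl hn t
    -- the zero predictor shows rules Q 2 is nonempty
    have hf0 : (fun (_ : Fin d → ℝ) (_ : Fin 1) => (0:ℝ)) ∈ Q.mem 1 := by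
      apply hQlin 1
      exact ⟨0, by intro z j; simp⟩
    have h0mem : (fun z => predBin (fun _ : Fin 1 => (0:ℝ))) ∈ rules Q 2 := by
      rw [rules_two]
      exact ⟨_, hf0, fun z => rfl⟩
    set S := (fun h => risk t φ h) '' rules Q 2 with hSdef
    have hne : S.Nonempty := ⟨_, _, h0mem, rfl⟩
    have hfin : S.Finite := by
      apply Set.Finite.subset
        (Set.finite_range (fun g : X → Fin 2 => 1 - ∑ x : X, t.p x (g x)))
      rintro _ ⟨h, -, rfl⟩
      exact ⟨fun x => h (φ x), (risk_eq t φ h).symm⟩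
    have hmem : bayes t ∈ S := hInf ▸ hne.csInf_mem hfin
    obtain ⟨h, hhrules, hhrisk⟩ := hmem
    have hsum : ∑ x : X, t.p x (h (φ x)) = ∑ x : X, t.p x (c x) := by
      have hhrisk' : risk t φ h = bayes t := hhrisk
      have h1 : risk t φ h = 1 - ∑ x : X, t.p x (h (φ x)) := risk_eq t φ h
      have h2 : bayes t = 1 - ∑ x : X, t.p x (c x) := rfl
      rw [h1, h2] at hhrisk'
      linarith
    have hkey : ∀ x : X, h (φ x) = c x := by
      have hzero : ∑ x : X, (t.p x (c x) - t.p x (h (φ x))) = 0 := by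
        rw [Finset.sum_sub_distrib, hsum]; ring
      have hterm0 := (Finset.sum_eq_zero_iff_of_nonneg
        (fun x _ => by
          have hpl := p_le_label t x (h (φ x))
          have hl : t.label x = c x := rfl
          rw [hl] at hpl
          linarith)).mp hzero
      intro x
      by_contra hne'
      have hlt : t.p x (h (φ x)) < t.p x (c x) := t.label_argmax x _ hne'
      have := hterm0 x (Finset.mem_univ x)
      linarith
    rw [rules_two] at hhrules
    obtain ⟨f, hf, hfz⟩ := hhrules
    exact ⟨f, hf, fun x => by rw [← hkey x, hfz (φ x)]⟩
  · -- shattered → population optimal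
    intro hsh k hk2 hkn t
    obtain ⟨h, hhmem, hhval⟩ : ∃ h ∈ rules Q k, ∀ x, h (φ x) = t.label x := by
      obtain ⟨m, rfl⟩ : ∃ m, k = m + 2 := ⟨k - 2, by omega⟩
      cases m with
      | zero =>
        obtain ⟨f, hf, hfv⟩ := hsh t.label t.label_inv
        exact ⟨fun z => predBin (f z), by rw [rules_two]; exact ⟨f, hf, fun z => rfl⟩,
          fun x => (hfv x).symm⟩
      | succ n =>
        have hcinv : ∀ j : Fin (n + 3),
            IsInvariant r (fun x => if t.label x = j then (1 : Fin 2) else 0) := by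
          intro j x x' hxx'
          simp only [t.label_inv x x' hxx']
        choose f hf hfv using fun j => hsh _ (hcinv j)
        obtain ⟨g, hg, hgv⟩ := buildVec hQlin hQclosed (n + 3) f hf
        refine ⟨fun z => predArg (g z), ?_, ?_⟩
        · show (fun z => predArg (g z)) ∈ rules Q (n + 3)
          rw [rules_succ]
          exact ⟨g, hg, fun z => rfl⟩
        intro x
        apply predArg_eq
        · rw [hgv]
          have hv := hfv (t.label x) x
          simp only [if_pos rfl, predBin] at hv
          by_contra hneg
          rw [if_neg hneg] at hv
          exact absurd hv (by decide)
        · intro j hj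
          rw [hgv]
          have hv := hfv j x
          rw [if_neg (Ne.symm hj)] at hv
          by_contra hnlt
          push_neg at hnlt
          rw [predBin, if_pos hnlt] at hv
          exact absurd hv (by decide)
    have hlow : ∀ h' : (Fin d → ℝ) → Fin k, bayes t ≤ risk t φ h' := bayes_le_risk t φ
    have hexact : risk t φ h = bayes t := by
      rw [risk_eq, bayes]
      congr 1
      exact Finset.sum_congr rfl fun x _ => by rw [hhval x]
    apply le_antisymm
    · exact csInf_le ⟨bayes t, by rintro _ ⟨h', -, rfl⟩; exact hlow h'⟩
        ⟨h, hhmem, hexact⟩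
    · exact le_csInf ⟨_, h, hhmem, rfl⟩ (by rintro _ ⟨h', -, rfl⟩; exact hlow h')

end ISSL
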